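/- Let X be a doubling metric space and Φ a dimension function with Φ(x) → δ as x → 0, where 0 < δ < ∞. Put θ = (1+δ)^{-1}. Then for every set E ⊆ X, the upper Φ-dimension of E equals the upper θ-Assouad spectrum of E, and the lower Φ-dimension of E equals the lower θ-Assouad spectrum of E. -/

import Mathlib

open Set Metric Filter Topology
open scoped ENNReal

noncomputable section

/-- The least number of closed balls of radius `r` needed to cover `E`
(`∞` if there is no finite cover). -/
def coverNumber {X : Type*} [PseudoMetricSpace X] (r : ℝ) (E : Set X) : ℝ≥0∞ :=
  ⨅ (s : Finset X) (_ : E ⊆ ⋃ x ∈ s, closedBall x r), (s.card : ℝ≥0∞)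

/-- `Φ : (0,1) → [0,∞)` is a dimension function if `x ^ (1 + Φ x)` decreases to `0`
as `x` decreases to `0`. -/
def IsDimensionFunction (Φ : ℝ → ℝ) : Prop :=
  (∀ x ∈ Ioo (0:ℝ) 1, 0 ≤ Φ x) ∧
  (∀ x ∈ Ioo (0:ℝ) 1, ∀ y ∈ Ioo (0:ℝ) 1, x ≤ y → x ^ (1 + Φ x) ≤ y ^ (1 + Φ y)) ∧
  Tendsto (fun x : ℝ => x ^ (1 + Φ x)) (nhdsWithin 0 (Ioo 0 1)) (nhds 0)

/-- A metric space is doubling if there is `M ≥ 1` such that every closed ball of radius `R`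
can be covered by at most `M` closed balls of radius `R / 2`. -/
def IsDoublingSpace (X : Type*) [PseudoMetricSpace X] : Prop :=
  ∃ M : ℕ, 1 ≤ M ∧ ∀ (x : X) (R : ℝ), ∃ s : Finset X, s.card ≤ M ∧
    closedBall x R ⊆ ⋃ y ∈ s, closedBall y (R / 2)

/-- The upper `Φ`-dimension. -/
def upperPhiDim {X : Type*} [PseudoMetricSpace X] (Φ : ℝ → ℝ) (E : Set X) : ℝ :=
  sInf {α : ℝ | ∃ c₁ > (0:ℝ), ∃ c₂ > (0:ℝ), ∀ r R : ℝ,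
    0 < r → r ≤ R ^ (1 + Φ R) → R ^ (1 + Φ R) ≤ R → R < c₁ → ∀ z ∈ E,
      coverNumber r (closedBall z R ∩ E) ≤ ENNReal.ofReal (c₂ * (R / r) ^ α)}

/-- The lower `Φ`-dimension. -/
def lowerPhiDim {X : Type*} [PseudoMetricSpace X] (Φ : ℝ → ℝ) (E : Set X) : ℝ :=
  sSup {α : ℝ | ∃ c₁ > (0:ℝ), ∃ c₂ > (0:ℝ), ∀ r R : ℝ,
    0 < r → r ≤ R ^ (1 + Φ R) → R ^ (1 + Φ R) ≤ R → R < c₁ → ∀ z ∈ E,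
      ENNReal.ofReal (c₂ * (R / r) ^ α) ≤ coverNumber r (closedBall z R ∩ E)}

/-- The (upper) Assouad dimension: the upper `Φ`-dimension with `Φ ≡ 0`. -/
def assouadDim {X : Type*} [PseudoMetricSpace X] (E : Set X) : ℝ :=
  upperPhiDim (fun _ => 0) E

/-- The lower Assouad dimension: the lower `Φ`-dimension with `Φ ≡ 0`. -/
def lowerAssouadDim {X : Type*} [PseudoMetricSpace X] (E : Set X) : ℝ :=
  lowerPhiDim (fun _ => 0) E

/-- The upper `θ`-Assouad spectrum: the upper `Φ`-dimension with constant `Φ = 1/θ - 1`. -/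
def upperAssouadSpectrum {X : Type*} [PseudoMetricSpace X] (θ : ℝ) (E : Set X) : ℝ :=
  upperPhiDim (fun _ => 1 / θ - 1) E

/-- The lower `θ`-Assouad spectrum: the lower `Φ`-dimension with constant `Φ = 1/θ - 1`. -/
def lowerAssouadSpectrum {X : Type*} [PseudoMetricSpace X] (θ : ℝ) (E : Set X) : ℝ :=
  lowerPhiDim (fun _ => 1 / θ - 1) E

/-- The upper quasi-Assouad dimension, `lim_{θ → 1}` of the upper `θ`-Assouad spectrum;
since the upper spectrum is nondecreasing in `θ`, this limit is the supremum over
`θ ∈ (0,1)`. -/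
def quasiAssouadDim {X : Type*} [PseudoMetricSpace X] (E : Set X) : ℝ :=
  ⨆ θ : Ioo (0:ℝ) 1, upperAssouadSpectrum (θ : ℝ) E

/-- The lower quasi-Assouad dimension, `lim_{θ → 1}` of the lower `θ`-Assouad spectrum;
since the lower spectrum is nonincreasing in `θ`, this limit is the infimum over
`θ ∈ (0,1)`. -/
def quasiLowerAssouadDim {X : Type*} [PseudoMetricSpace X] (E : Set X) : ℝ :=
  ⨅ θ : Ioo (0:ℝ) 1, lowerAssouadSpectrum (θ : ℝ) E

/-- Upper box dimension `limsup_{r → 0} log N_r(E) / |log r|`. -/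
def upperBoxDim {X : Type*} [PseudoMetricSpace X] (E : Set X) : ℝ :=
  limsup (fun r : ℝ => Real.log (coverNumber r E).toReal / |Real.log r|)
    (nhdsWithin 0 (Ioo 0 1))

/-- Lower box dimension `liminf_{r → 0} log N_r(E) / |log r|`. -/
def lowerBoxDim {X : Type*} [PseudoMetricSpace X] (E : Set X) : ℝ :=
  liminf (fun r : ℝ => Real.log (coverNumber r E).toReal / |Real.log r|)
    (nhdsWithin 0 (Ioo 0 1))


/-!
Write `r_Φ(R) = R ^ (1 + Φ R)` for the threshold scale of the `Φ`-dimension. Since `Φ R → δ`, the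
thresholds `r_Φ(R)` and `R ^ (1 + δ)` differ only by a factor `R ^ o(1)`, so an exponent admissible
for one of `Φ`, `δ` becomes admissible for the other after an arbitrarily small loss `ε`. For the
upper dimension this only uses that `N_r` decreases in `r`: a scale `r` beyond `r_Φ(R)` is handled
by `N_r ≤ N_{r_Φ(R)}` and `(R / r_Φ(R)) ^ α = R ^ (-Φ(R) α) ≤ (R / r) ^ (α + ε)`. For the lower
dimension one refines `r_Φ(R)`-covers to `r`-covers, which in a doubling space costs a factor
`C (r / r_Φ(R)) ^ s ≤ C R ^ (-o(1))`, again absorbed by `ε`. So the admissible exponent sets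
interleave and have the same infimum, resp. supremum.
-/

theorem Real.sInf_eq_sInf_of_forall_add_mem {A B : Set ℝ}
    (hAB : ∀ a ∈ A, ∀ ε > 0, a + ε ∈ B) (hBA : ∀ b ∈ B, ∀ ε > 0, b + ε ∈ A) :
    sInf A = sInf B := by
  have lowerBounds_subset {A B : Set ℝ} (h : ∀ b ∈ B, ∀ ε > 0, b + ε ∈ A) :
      lowerBounds A ⊆ lowerBounds B :=
    fun x hx b hb => le_of_forall_pos_le_add fun ε hε => hx (h b hb ε hε)
  have hlb : lowerBounds A = lowerBounds B :=
    (lowerBounds_subset hBA).antisymm (lowerBounds_subset hAB)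
  rcases A.eq_empty_or_nonempty with rfl | hA
  · rw [eq_empty_of_forall_notMem fun b hb => notMem_empty _ (hBA b hb 1 one_pos)]
  have hB : B.Nonempty := let ⟨a, ha⟩ := hA; ⟨a + 1, hAB a ha 1 one_pos⟩
  by_cases hbdd : BddBelow A
  · have hglb : IsGLB B (sInf A) := by
      rw [IsGLB, ← hlb]
      exact isGLB_csInf hA hbdd
    exact (hglb.csInf_eq hB).symm
  · have hbddB : ¬BddBelow B := by rwa [BddBelow, ← hlb]
    rw [Real.sInf_of_not_bddBelow hbdd, Real.sInf_of_not_bddBelow hbddB]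

theorem Real.sSup_eq_sSup_of_forall_sub_mem {A B : Set ℝ}
    (hAB : ∀ a ∈ A, ∀ ε > 0, a - ε ∈ B) (hBA : ∀ b ∈ B, ∀ ε > 0, b - ε ∈ A) :
    sSup A = sSup B := by
  have h := Real.sInf_eq_sInf_of_forall_add_mem (A := -A) (B := -B)
    (fun a ha ε hε => by rw [Set.mem_neg, neg_add']; exact hAB _ ha ε hε)
    (fun b hb ε hε => by rw [Set.mem_neg, neg_add']; exact hBA _ hb ε hε)
  rwa [Real.sInf_neg, Real.sInf_neg, neg_inj] at h

theorem div_rpow_one_add {R : ℝ} (hR : 0 < R) (a : ℝ) : R / R ^ (1 + a) = R ^ (-a) := by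
  rw [Real.rpow_add hR, Real.rpow_one, Real.rpow_neg hR.le]
  field_simp

theorem div_rpow_one_add_rpow_le {R r a b p q : ℝ} (hR : 0 < R) (hR1 : R ≤ 1) (hr : 0 < r)
    (hrb : r ≤ R ^ (1 + b)) (hq : 0 ≤ q) (h : a * p ≤ b * q) :
    (R / R ^ (1 + a)) ^ p ≤ (R / r) ^ q :=
  calc (R / R ^ (1 + a)) ^ p = R ^ (-(a * p)) := by
        rw [div_rpow_one_add hR, ← Real.rpow_mul hR.le, neg_mul]
    _ ≤ R ^ (-(b * q)) := Real.rpow_le_rpow_of_exponent_ge hR hR1 (by linarith)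
    _ = (R / R ^ (1 + b)) ^ q := by rw [div_rpow_one_add hR, ← Real.rpow_mul hR.le, neg_mul]
    _ ≤ (R / r) ^ q := by gcongr

theorem div_rpow_mul_div_rpow_le {R r a b α ε s : ℝ} (hR : 0 < R) (hR1 : R ≤ 1)
    (hr₁ : R ^ (1 + a) ≤ r) (hr₂ : r ≤ R ^ (1 + b)) (hαε : 0 ≤ α - ε) (hs : 0 ≤ s)
    (h : 0 ≤ a * ε + (b - a) * s) :
    (R / r) ^ (α - ε) * (r / R ^ (1 + a)) ^ s ≤ (R / R ^ (1 + a)) ^ α := by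
  have hr : 0 < R ^ (1 + a) := by positivity
  have hr' : 0 < r := hr.trans_le hr₁
  have hratio : r / R ^ (1 + a) ≤ R ^ (b - a) := by
    calc r / R ^ (1 + a) ≤ R ^ (1 + b) / R ^ (1 + a) := by gcongr
      _ = R ^ (b - a) := by rw [← Real.rpow_sub hR]; ring_nf
  calc (R / r) ^ (α - ε) * (r / R ^ (1 + a)) ^ s
      ≤ (R / R ^ (1 + a)) ^ (α - ε) * (R ^ (b - a)) ^ s := by gcongr
    _ = R ^ (-a * (α - ε) + (b - a) * s) := by
        rw [div_rpow_one_add hR, ← Real.rpow_mul hR.le, ← Real.rpow_mul hR.le,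
          Real.rpow_add hR]
    _ ≤ R ^ (-a * α) := Real.rpow_le_rpow_of_exponent_ge hR hR1 (by linarith)
    _ = (R / R ^ (1 + a)) ^ α := by rw [div_rpow_one_add hR, ← Real.rpow_mul hR.le]

section Covering

variable {X : Type*} [PseudoMetricSpace X]

theorem coverNumber_le {r : ℝ} {E : Set X} (s : Finset X) (hs : E ⊆ ⋃ x ∈ s, closedBall x r) :
    coverNumber r E ≤ s.card :=
  iInf₂_le s hs

theorem le_coverNumber {r : ℝ} {E : Set X} {a : ℝ≥0∞}
    (h : ∀ s : Finset X, E ⊆ ⋃ x ∈ s, closedBall x r → a ≤ s.card) : a ≤ coverNumber r E :=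
  le_iInf₂ h

theorem coverNumber_anti {r r' : ℝ} (h : r ≤ r') (E : Set X) :
    coverNumber r' E ≤ coverNumber r E :=
  le_coverNumber fun s hs =>
    coverNumber_le s (hs.trans (iUnion₂_mono fun _ _ => closedBall_subset_closedBall h))

theorem one_le_coverNumber {r : ℝ} {E : Set X} (hE : E.Nonempty) : 1 ≤ coverNumber r E := by
  refine le_coverNumber fun s hs => ?_
  obtain ⟨x, hx⟩ := hE
  obtain ⟨y, hy, -⟩ := mem_iUnion₂.1 (hs hx)
  exact_mod_cast Finset.card_pos.2 ⟨y, hy⟩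

theorem exists_cover_biUnion_closedBall {r r' K : ℝ}
    (h : ∀ x : X, ∃ t : Finset X, (t.card : ℝ) ≤ K ∧ closedBall x r ⊆ ⋃ y ∈ t, closedBall y r')
    (s : Finset X) :
    ∃ t : Finset X, (t.card : ℝ) ≤ s.card * K ∧
      ⋃ x ∈ s, closedBall x r ⊆ ⋃ y ∈ t, closedBall y r' := by
  classical
  choose T hTcard hTcov using h
  refine ⟨s.biUnion T, ?_, iUnion₂_subset fun x hx => (hTcov x).trans ?_⟩
  · calc ((s.biUnion T).card : ℝ) ≤ ∑ x ∈ s, ((T x).card : ℝ) := by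
          exact_mod_cast Finset.card_biUnion_le
      _ ≤ s.card * K := by simpa using Finset.sum_le_card_nsmul s _ K fun x _ => hTcard x
  · exact iUnion₂_mono' fun y hy => ⟨y, Finset.mem_biUnion.2 ⟨x, hx, hy⟩, subset_rfl⟩

theorem coverNumber_le_mul_of_forall_closedBall {r r' K : ℝ} (hK : 0 < K)
    (h : ∀ x : X, ∃ t : Finset X, (t.card : ℝ) ≤ K ∧ closedBall x r ⊆ ⋃ y ∈ t, closedBall y r')
    (S : Set X) :
    coverNumber r' S ≤ coverNumber r S * ENNReal.ofReal K := by
  rw [← ENNReal.div_le_iff (by simpa using hK) ENNReal.ofReal_ne_top]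
  refine le_coverNumber fun s hs => ENNReal.div_le_of_le_mul ?_
  obtain ⟨t, ht, htcov⟩ := exists_cover_biUnion_closedBall h s
  calc coverNumber r' S ≤ t.card := coverNumber_le t (hs.trans htcov)
    _ = ENNReal.ofReal t.card := (ENNReal.ofReal_natCast _).symm
    _ ≤ ENNReal.ofReal (s.card * K) := ENNReal.ofReal_le_ofReal ht
    _ = s.card * ENNReal.ofReal K := by
        rw [ENNReal.ofReal_mul (by positivity), ENNReal.ofReal_natCast]

theorem IsDoublingSpace.exists_cover_closedBall_div_two_pow (hX : IsDoublingSpace X) :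
    ∃ M : ℕ, 1 ≤ M ∧ ∀ (k : ℕ) (x : X) (R : ℝ), ∃ t : Finset X, (t.card : ℝ) ≤ M ^ k ∧
      closedBall x R ⊆ ⋃ y ∈ t, closedBall y (R / 2 ^ k) := by
  obtain ⟨M, hM, hdouble⟩ := hX
  refine ⟨M, hM, fun k => ?_⟩
  induction k with
  | zero => exact fun x R => ⟨{x}, by simp, by simp⟩
  | succ k ih =>
    intro x R
    obtain ⟨s, hs, hcov⟩ := hdouble x R
    obtain ⟨t, ht, htcov⟩ := exists_cover_biUnion_closedBall (fun y => ih y (R / 2)) s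
    refine ⟨t, ht.trans ?_, hcov.trans ?_⟩
    · rw [pow_succ']
      gcongr
    · simpa only [pow_succ', div_div] using htcov

theorem IsDoublingSpace.exists_cover_closedBall (hX : IsDoublingSpace X) :
    ∃ C ≥ (1 : ℝ), ∃ s ≥ (0 : ℝ), ∀ (x : X) (r r' : ℝ), 0 < r' → r' ≤ r →
      ∃ t : Finset X, (t.card : ℝ) ≤ C * (r / r') ^ s ∧
        closedBall x r ⊆ ⋃ y ∈ t, closedBall y r' := by
  obtain ⟨M, hM, hcov⟩ := hX.exists_cover_closedBall_div_two_pow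
  have hM1 : (1 : ℝ) ≤ M := by exact_mod_cast hM
  have hs : 0 ≤ Real.logb 2 M := Real.logb_nonneg one_lt_two hM1
  refine ⟨M, hM1, Real.logb 2 M, hs, fun x r r' hr' hr'r => ?_⟩
  obtain ⟨n, hn, hn'⟩ := exists_nat_pow_near ((one_le_div hr').2 hr'r) one_lt_two
  obtain ⟨t, ht, htcov⟩ := hcov (n + 1) x r
  refine ⟨t, ht.trans ?_, htcov.trans (iUnion₂_mono fun y _ => closedBall_subset_closedBall ?_)⟩
  · calc (M : ℝ) ^ (n + 1) = M * ((2 : ℝ) ^ n) ^ Real.logb 2 M := by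
          rw [pow_succ', ← Real.rpow_natCast_mul zero_le_two, mul_comm (n : ℝ),
            Real.rpow_mul_natCast zero_le_two, Real.rpow_logb two_pos (by norm_num) (by positivity)]
      _ ≤ M * (r / r') ^ Real.logb 2 M := by gcongr
  · rw [div_lt_iff₀ hr'] at hn'
    rw [div_le_iff₀ (by positivity)]
    linarith

end Covering

section Exponents

variable {X : Type*} [PseudoMetricSpace X]

theorem exists_forall_phiScale_iff_eventually (Φ : ℝ → ℝ) (P : ℝ → ℝ → Prop) :
    (∃ c₁ > (0 : ℝ), ∀ r R : ℝ,
        0 < r → r ≤ R ^ (1 + Φ R) → R ^ (1 + Φ R) ≤ R → R < c₁ → P r R) ↔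
      ∀ᶠ R in 𝓝[>] 0, ∀ r, 0 < r → r ≤ R ^ (1 + Φ R) → R ^ (1 + Φ R) ≤ R → P r R := by
  rw [(nhdsGT_basis 0).eventually_iff]
  exact ⟨fun ⟨c₁, hc₁, H⟩ => ⟨c₁, hc₁, fun R hR r hr h₁ h₂ => H r R hr h₁ h₂ hR.2⟩,
    fun ⟨c₁, hc₁, H⟩ => ⟨c₁, hc₁, fun r R hr h₁ h₂ hR =>
      H ⟨hr.trans_le (h₁.trans h₂), hR⟩ r hr h₁ h₂⟩⟩

def upperPhiExponents (Φ : ℝ → ℝ) (E : Set X) : Set ℝ :=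
  {α | ∃ c > (0 : ℝ), ∀ᶠ R in 𝓝[>] 0, ∀ r, 0 < r → r ≤ R ^ (1 + Φ R) → R ^ (1 + Φ R) ≤ R →
    ∀ z ∈ E, coverNumber r (closedBall z R ∩ E) ≤ ENNReal.ofReal (c * (R / r) ^ α)}

def lowerPhiExponents (Φ : ℝ → ℝ) (E : Set X) : Set ℝ :=
  {α | ∃ c > (0 : ℝ), ∀ᶠ R in 𝓝[>] 0, ∀ r, 0 < r → r ≤ R ^ (1 + Φ R) → R ^ (1 + Φ R) ≤ R →
    ∀ z ∈ E, ENNReal.ofReal (c * (R / r) ^ α) ≤ coverNumber r (closedBall z R ∩ E)}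

theorem upperPhiDim_eq_sInf (Φ : ℝ → ℝ) (E : Set X) :
    upperPhiDim Φ E = sInf (upperPhiExponents Φ E) := by
  refine congrArg sInf (ext fun α => ?_)
  simp only [upperPhiExponents, ← exists_forall_phiScale_iff_eventually]
  exact ⟨fun ⟨c₁, hc₁, c, hc, H⟩ => ⟨c, hc, c₁, hc₁, H⟩,
    fun ⟨c, hc, c₁, hc₁, H⟩ => ⟨c₁, hc₁, c, hc, H⟩⟩

theorem lowerPhiDim_eq_sSup (Φ : ℝ → ℝ) (E : Set X) :
    lowerPhiDim Φ E = sSup (lowerPhiExponents Φ E) := by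
  refine congrArg sSup (ext fun α => ?_)
  simp only [lowerPhiExponents, ← exists_forall_phiScale_iff_eventually]
  exact ⟨fun ⟨c₁, hc₁, c, hc, H⟩ => ⟨c, hc, c₁, hc₁, H⟩,
    fun ⟨c, hc, c₁, hc₁, H⟩ => ⟨c₁, hc₁, c, hc, H⟩⟩

theorem eventually_rpow_one_add_le {Φ : ℝ → ℝ} (hΦ : ∀ᶠ R in 𝓝[>] 0, 0 ≤ Φ R) :
    ∀ᶠ R in 𝓝[>] 0, R ^ (1 + Φ R) ≤ R := by
  filter_upwards [hΦ, Ioo_mem_nhdsGT one_pos] with R hΦR hR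
  simpa using Real.rpow_le_rpow_of_exponent_ge hR.1 hR.2.le (by linarith : (1 : ℝ) ≤ 1 + Φ R)

theorem nonneg_of_mem_upperPhiExponents {Φ : ℝ → ℝ} {E : Set X}
    (hΦ : ∀ᶠ R in 𝓝[>] 0, 0 ≤ Φ R) (hE : E.Nonempty) {α : ℝ}
    (hα : α ∈ upperPhiExponents Φ E) : 0 ≤ α := by
  by_contra! hneg
  obtain ⟨c, hc, hcov⟩ := hα
  obtain ⟨R, hR, hR₁, hcovR⟩ :=
    (eventually_mem_nhdsWithin.and ((eventually_rpow_one_add_le hΦ).and hcov)).exists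
  replace hR : 0 < R := hR
  -- a negative exponent would make `c * (R / r) ^ α` tend to `0` as `r → 0`
  have hdecay : Tendsto (fun r => c * (R / r) ^ α) (𝓝[>] 0) (𝓝 0) := by
    have hRr : Tendsto (fun r => R / r) (𝓝[>] 0) atTop := by
      simpa only [div_eq_mul_inv] using tendsto_inv_nhdsGT_zero.const_mul_atTop hR
    simpa using ((tendsto_rpow_neg_atTop (neg_pos.2 hneg)).comp hRr).const_mul c
  have hr_small : ∀ᶠ r in 𝓝[>] 0, r ≤ R ^ (1 + Φ R) :=
    (eventually_le_nhds (Real.rpow_pos_of_pos hR _)).filter_mono nhdsWithin_le_nhds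
  obtain ⟨r, hr, hrR, hsmall⟩ :=
    (eventually_mem_nhdsWithin.and (hr_small.and (hdecay.eventually_lt_const one_pos))).exists
  obtain ⟨z, hz⟩ := hE
  have hcount : 1 ≤ coverNumber r (closedBall z R ∩ E) :=
    one_le_coverNumber ⟨z, mem_closedBall_self hR.le, hz⟩
  exact hsmall.not_ge (ENNReal.one_le_ofReal.1 (hcount.trans (hcovR r hr hrR hR₁ z hz)))

theorem nonpos_mem_lowerPhiExponents (Φ : ℝ → ℝ) (E : Set X) {α : ℝ} (hα : α ≤ 0) :
    α ∈ lowerPhiExponents Φ E := by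
  refine ⟨1, one_pos, Eventually.of_forall fun R r hr h₁ h₂ z hz => ?_⟩
  have hRr : r ≤ R := h₁.trans h₂
  have hcount : 1 ≤ coverNumber r (closedBall z R ∩ E) :=
    one_le_coverNumber ⟨z, mem_closedBall_self (hr.le.trans hRr), hz⟩
  refine le_trans ?_ hcount
  rw [one_mul, ENNReal.ofReal_le_one]
  exact Real.rpow_le_one_of_one_le_of_nonpos ((one_le_div hr).2 hRr) hα

end Exponents

section Transfer

variable {X : Type*} [PseudoMetricSpace X] {Φ₁ Φ₂ : ℝ → ℝ} {δ : ℝ} {E : Set X} {α ε : ℝ}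

theorem add_mem_upperPhiExponents (hδ : 0 < δ) (hlim₁ : Tendsto Φ₁ (𝓝[>] 0) (𝓝 δ))
    (hlim₂ : Tendsto Φ₂ (𝓝[>] 0) (𝓝 δ)) (hα : α ∈ upperPhiExponents Φ₁ E) (hε : 0 < ε) :
    α + ε ∈ upperPhiExponents Φ₂ E := by
  have hΦ₁ : ∀ᶠ R in 𝓝[>] 0, 0 ≤ Φ₁ R := hlim₁.eventually_const_le hδ
  have hexp : ∀ᶠ R in 𝓝[>] 0, Φ₁ R * α < Φ₂ R * (α + ε) :=
    (hlim₁.mul_const α).eventually_lt (hlim₂.mul_const _)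
      (mul_lt_mul_of_pos_left (lt_add_of_pos_right α hε) hδ)
  obtain ⟨c, hc, hcov⟩ := id hα
  refine ⟨c, hc, ?_⟩
  filter_upwards [hcov, hexp, eventually_rpow_one_add_le hΦ₁, Ioo_mem_nhdsGT one_pos]
    with R hcovR hexpR hR₁ hR r hr hr₂ _ z hz
  obtain ⟨hR0, hR1⟩ := hR
  have hα0 : 0 ≤ α := nonneg_of_mem_upperPhiExponents hΦ₁ ⟨z, hz⟩ hα
  rcases le_or_gt r (R ^ (1 + Φ₁ R)) with hr₁ | hr₁
  · have hRr : 1 ≤ R / r := (one_le_div hr).2 (hr₁.trans hR₁)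
    calc coverNumber r (closedBall z R ∩ E) ≤ ENNReal.ofReal (c * (R / r) ^ α) :=
          hcovR r hr hr₁ hR₁ z hz
      _ ≤ ENNReal.ofReal (c * (R / r) ^ (α + ε)) := by
          gcongr
          linarith
  · calc coverNumber r (closedBall z R ∩ E)
        ≤ coverNumber (R ^ (1 + Φ₁ R)) (closedBall z R ∩ E) := coverNumber_anti hr₁.le _
      _ ≤ ENNReal.ofReal (c * (R / R ^ (1 + Φ₁ R)) ^ α) :=
          hcovR _ (Real.rpow_pos_of_pos hR0 _) le_rfl hR₁ z hz
      _ ≤ ENNReal.ofReal (c * (R / r) ^ (α + ε)) := by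
          gcongr
          exact div_rpow_one_add_rpow_le hR0 hR1.le hr hr₂ (by linarith) hexpR.le

theorem sub_mem_lowerPhiExponents (hX : IsDoublingSpace X) (hδ : 0 < δ)
    (hlim₁ : Tendsto Φ₁ (𝓝[>] 0) (𝓝 δ)) (hlim₂ : Tendsto Φ₂ (𝓝[>] 0) (𝓝 δ))
    (hα : α ∈ lowerPhiExponents Φ₁ E) (hε : 0 < ε) :
    α - ε ∈ lowerPhiExponents Φ₂ E := by
  rcases le_or_gt (α - ε) 0 with hαε | hαε
  · exact nonpos_mem_lowerPhiExponents Φ₂ E hαε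
  obtain ⟨C, hC, s, hs, hball⟩ := hX.exists_cover_closedBall
  have hC0 : 0 < C := zero_lt_one.trans_le hC
  have hexp : ∀ᶠ R in 𝓝[>] 0, 0 < Φ₁ R * ε + (Φ₂ R - Φ₁ R) * s := by
    refine Tendsto.eventually_const_lt (by positivity : 0 < δ * ε) ?_
    simpa using (hlim₁.mul_const ε).add ((hlim₂.sub hlim₁).mul_const s)
  obtain ⟨c, hc, hcov⟩ := hα
  refine ⟨c / C, by positivity, ?_⟩
  filter_upwards [hcov, hexp, eventually_rpow_one_add_le (hlim₁.eventually_const_le hδ),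
    Ioo_mem_nhdsGT one_pos] with R hcovR hexpR hR₁ hR r hr hr₂ _ z hz
  obtain ⟨hR0, hR1⟩ := hR
  rcases le_or_gt r (R ^ (1 + Φ₁ R)) with hr₁ | hr₁
  · have hRr : 1 ≤ R / r := (one_le_div hr).2 (hr₁.trans hR₁)
    refine le_trans (ENNReal.ofReal_le_ofReal ?_) (hcovR r hr hr₁ hR₁ z hz)
    exact mul_le_mul (div_le_self hc.le hC) (Real.rpow_le_rpow_of_exponent_le hRr (by linarith))
      (by positivity) hc.le
  · set r' := R ^ (1 + Φ₁ R)
    have hr' : 0 < r' := Real.rpow_pos_of_pos hR0 _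
    have hK : 0 < C * (r / r') ^ s := by positivity
    have hrefine := coverNumber_le_mul_of_forall_closedBall hK
      (fun x => hball x r r' hr' hr₁.le) (closedBall z R ∩ E)
    refine (ENNReal.mul_le_mul_iff_left (by simpa using hK) ENNReal.ofReal_ne_top).1 ?_
    calc ENNReal.ofReal (c / C * (R / r) ^ (α - ε)) * ENNReal.ofReal (C * (r / r') ^ s)
        = ENNReal.ofReal (c * ((R / r) ^ (α - ε) * (r / r') ^ s)) := by
          rw [← ENNReal.ofReal_mul (by positivity)]
          congr 1
          field_simp
      _ ≤ ENNReal.ofReal (c * (R / r') ^ α) := by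
          gcongr
          exact div_rpow_mul_div_rpow_le hR0 hR1.le hr₁.le hr₂ hαε.le hs hexpR.le
      _ ≤ coverNumber r' (closedBall z R ∩ E) := hcovR r' hr' le_rfl hR₁ z hz
      _ ≤ coverNumber r (closedBall z R ∩ E) * ENNReal.ofReal (C * (r / r') ^ s) := hrefine

end Transfer

theorem phiDim_eq_assouadSpectrum_of_tendsto_general {X : Type*} [MetricSpace X]
    (hX : IsDoublingSpace X) (Φ : ℝ → ℝ)
    (δ : ℝ) (hδ : 0 < δ) (hlim : Tendsto Φ (nhdsWithin 0 (Ioo 0 1)) (nhds δ))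
    (E : Set X) :
    upperPhiDim Φ E = upperAssouadSpectrum (1 + δ)⁻¹ E ∧
    lowerPhiDim Φ E = lowerAssouadSpectrum (1 + δ)⁻¹ E := by
  have hspectrum : (fun _ : ℝ => 1 / (1 + δ)⁻¹ - 1) = fun _ => δ := by
    funext
    rw [one_div, inv_inv, add_sub_cancel_left]
  rw [nhdsWithin_Ioo_eq_nhdsGT one_pos] at hlim
  have hconst : Tendsto (fun _ : ℝ => δ) (𝓝[>] 0) (𝓝 δ) := tendsto_const_nhds
  rw [upperAssouadSpectrum, lowerAssouadSpectrum, hspectrum, upperPhiDim_eq_sInf,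
    upperPhiDim_eq_sInf, lowerPhiDim_eq_sSup, lowerPhiDim_eq_sSup]
  exact ⟨Real.sInf_eq_sInf_of_forall_add_mem
      (fun _ hα _ hε => add_mem_upperPhiExponents hδ hlim hconst hα hε)
      (fun _ hα _ hε => add_mem_upperPhiExponents hδ hconst hlim hα hε),
    Real.sSup_eq_sSup_of_forall_sub_mem
      (fun _ hα _ hε => sub_mem_lowerPhiExponents hX hδ hlim hconst hα hε)
      (fun _ hα _ hε => sub_mem_lowerPhiExponents hX hδ hconst hlim hα hε)⟩

/-- If `Φ(x) → δ ∈ (0,∞)` as `x → 0`, then the `Φ`-dimensions are the `θ`-Assouad spectra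
for `θ = (1+δ)⁻¹`. -/
theorem phiDim_eq_assouadSpectrum_of_tendsto {X : Type*} [MetricSpace X]
    (hX : IsDoublingSpace X) (Φ : ℝ → ℝ) (hΦ : IsDimensionFunction Φ)
    (δ : ℝ) (hδ : 0 < δ) (hlim : Tendsto Φ (nhdsWithin 0 (Ioo 0 1)) (nhds δ))
    (E : Set X) :
    upperPhiDim Φ E = upperAssouadSpectrum (1 + δ)⁻¹ E ∧
    lowerPhiDim Φ E = lowerAssouadSpectrum (1 + δ)⁻¹ E :=
  phiDim_eq_assouadSpectrum_of_tendsto_general hX Φ δ hδ hlim E
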